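/- arXiv:1110.5128 — 3 statements merged into one kernel-verified Lean document; each statement's English description precedes it below -/
import Mathlib

section
/- Let V be a finite-dimensional real vector space, let a be a positive definite symmetric bilinear form on V, let b ∈ V with a(b,b) > 0, and let κ ∈ ℝ satisfy exp(κ) · a(b,b) = 4. Define a new symmetric bilinear form h := exp(κ) • a and the vector W := (1/2) • b. Then h(W,W) = 1, and for every y ∈ V with a(b,y) > 0, the number F := a(y,y)/a(b,y) is positive, satisfies F = h(y,y)/(2 · h(W,y)), and satisfies the navigation equation h((1/F)•y − W, (1/F)•y − W) = 1. -/
/-!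
The point `(a b y / a y y) • y` is the `a`-orthogonal projection of `b` onto the line through `y`,
so by Thales' theorem it lies on the `a`-sphere with diameter `[0, b]`: its squared `a`-distance
from `b / 2` is `a b b / 4`. Since `1 / F(y) = a b y / a y y` and `exp κ` rescales that radius to
`1`, this is the navigation equation.
-/

namespace LinearMap.BilinForm

variable {V : Type*} [AddCommGroup V] [Module ℝ V]

theorem apply_proj_sub_half_smul_self (a : LinearMap.BilinForm ℝ V) {b y : V}
    (hyb : a y b = a b y) (hy : a y y ≠ 0) :
    a ((a b y / a y y) • y - (1 / 2 : ℝ) • b) ((a b y / a y y) • y - (1 / 2 : ℝ) • b) =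
      a b b / 4 := by
  simp only [map_sub, map_smul, LinearMap.sub_apply, LinearMap.smul_apply, smul_eq_mul, hyb]
  field_simp
  ring

end LinearMap.BilinForm

open Real

theorem stmt0_general {V : Type*} [AddCommGroup V] [Module ℝ V]
    (a : LinearMap.BilinForm ℝ V)
    (ha_symm : ∀ x y : V, a x y = a y x)
    (ha_pos : ∀ v : V, v ≠ 0 → 0 < a v v)
    (b : V)
    (κ : ℝ) (hκ : Real.exp κ * a b b = 4)
    (h : LinearMap.BilinForm ℝ V) (hh : h = Real.exp κ • a)
    (W : V) (hW : W = (1/2 : ℝ) • b) :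
    h W W = 1 ∧
      ∀ y : V, 0 < a b y →
        0 < a y y / a b y ∧
        a y y / a b y = h y y / (2 * h W y) ∧
        h ((1 / (a y y / a b y)) • y - W) ((1 / (a y y / a b y)) • y - W) = 1 := by
  subst hh hW
  refine ⟨?_, fun y hby => ?_⟩
  · simp only [LinearMap.smul_apply, map_smul, smul_eq_mul]
    linear_combination hκ / 4
  have hyy : 0 < a y y := ha_pos y (by rintro rfl; simp at hby)
  refine ⟨div_pos hyy hby, ?_, ?_⟩
  · simp only [LinearMap.smul_apply, map_smul, smul_eq_mul]
    field_simp
  · rw [one_div_div, LinearMap.smul_apply, LinearMap.smul_apply,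
      LinearMap.BilinForm.apply_proj_sub_half_smul_self a (ha_symm y b) hyy.ne', smul_eq_mul]
    linear_combination hκ / 4

/-- Theorem 1, pointwise algebraic content.
Let `V` be a finite-dimensional real vector space, `a` a positive definite symmetric
bilinear form, `b ∈ V` with `a b b > 0`, and `κ ∈ ℝ` with `exp κ * a b b = 4`.
With `h := exp κ • a` and `W := (1/2) • b`, we have `h W W = 1`, and for every `y` with
`a b y > 0`, the number `F := a y y / a b y` is positive, equals `h y y / (2 * h W y)`,
and satisfies the navigation equation `h ((1/F) • y - W) ((1/F) • y - W) = 1`. -/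
theorem stmt0 {V : Type*} [AddCommGroup V] [Module ℝ V] [FiniteDimensional ℝ V]
    (a : LinearMap.BilinForm ℝ V)
    (ha_symm : ∀ x y : V, a x y = a y x)
    (ha_pos : ∀ v : V, v ≠ 0 → 0 < a v v)
    (b : V) (hb : 0 < a b b)
    (κ : ℝ) (hκ : Real.exp κ * a b b = 4)
    (h : LinearMap.BilinForm ℝ V) (hh : h = Real.exp κ • a)
    (W : V) (hW : W = (1/2 : ℝ) • b) :
    h W W = 1 ∧
      ∀ y : V, 0 < a b y →
        0 < a y y / a b y ∧
        a y y / a b y = h y y / (2 * h W y) ∧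
        h ((1 / (a y y / a b y)) • y - W) ((1 / (a y y / a b y)) • y - W) = 1 :=
  stmt0_general a ha_symm ha_pos b κ hκ h hh W hW
end

section
/- Let V be a real inner product space with 2 ≤ dim V. Then there is no linear map N : V → V such that ⟨y, z⟩ • y = ‖y‖² • (N z) for all y, z ∈ V. -/
open RealInnerProductSpace

/-!
Taking `y = z` forces `N = id`. The identity `⟪y, z⟫ • y = ‖y‖² • z` then exhibits every `z`
as a multiple of any fixed `y ≠ 0`, so `V` would have dimension at most one.
-/

section

variable {V : Type*} [NormedAddCommGroup V] [InnerProductSpace ℝ V]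

lemma LinearMap.eq_id_of_inner_smul_eq_norm_sq_smul (N : V →ₗ[ℝ] V)
    (hN : ∀ y z : V, ⟪y, z⟫ • y = (‖y‖ ^ 2 : ℝ) • N z) : N = LinearMap.id := by
  ext x
  rcases eq_or_ne x 0 with rfl | hx
  · exact N.map_zero
  · have hx2 : (‖x‖ ^ 2 : ℝ) ≠ 0 := by positivity
    have hxx := hN x x
    rw [real_inner_self_eq_norm_sq] at hxx
    exact smul_right_injective V hx2 hxx.symm

lemma rank_le_one_of_inner_smul_eq_norm_sq_smul
    (h : ∀ y z : V, ⟪y, z⟫ • y = (‖y‖ ^ 2 : ℝ) • z) : Module.rank ℝ V ≤ 1 := by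
  rw [rank_le_one_iff]
  rcases subsingleton_or_nontrivial V with _ | _
  · exact ⟨0, fun z => ⟨0, Subsingleton.elim _ _⟩⟩
  · obtain ⟨y, hy⟩ := exists_ne (0 : V)
    have hy2 : (‖y‖ ^ 2 : ℝ) ≠ 0 := by positivity
    refine ⟨y, fun z => ⟨⟪y, z⟫ / ‖y‖ ^ 2, ?_⟩⟩
    rw [div_eq_inv_mul, mul_smul, h y z, inv_smul_smul₀ hy2]

end

/-- tensorial impossibility in the proof of Lemma 1.
In a real inner product space of dimension at least 2, there is no linear map
`N : V → V` with `⟪y, z⟫ • y = ‖y‖² • N z` for all `y, z`. -/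
theorem stmt8 {V : Type*} [NormedAddCommGroup V] [InnerProductSpace ℝ V]
    (hdim : 2 ≤ Module.rank ℝ V) :
    ¬ ∃ N : V →ₗ[ℝ] V, ∀ y z : V, ⟪y, z⟫ • y = (‖y‖ ^ 2 : ℝ) • N z := by
  rintro ⟨N, hN⟩
  obtain rfl := N.eq_id_of_inner_smul_eq_norm_sq_smul hN
  have hrank : Module.rank ℝ V ≤ 1 := rank_le_one_of_inner_smul_eq_norm_sq_smul hN
  exact ((by norm_num : (1 : Cardinal) < 2).trans_le hdim).not_ge hrank
end

section
/- Let V be a real inner product space, let W ∈ V with ‖W‖ = 1, let M : V →ₗ[ℝ] V be a linear map with M W = 0, let K ∈ ℝ, and suppose there exists a linear map C : V →ₗ[ℝ] V such that ⟨W, z⟩ • (M (M y) + K • y) = ⟨W, y⟩ • (C z) for all y, z ∈ V. Then C z = K ⟨W, z⟩ • W for all z, and M (M y) = K • (⟨W, y⟩ • W − y) for all y ∈ V. -/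
open RealInnerProductSpace

/-- Section 3.5, steps (3.16)–(3.17).
For a unit vector `W`, a linear map `M` with `M W = 0`, `K ∈ ℝ`, and a linear map `C`
with `⟪W, z⟫ • (M (M y) + K • y) = ⟪W, y⟫ • C z` for all `y, z`, we conclude
`C z = (K * ⟪W, z⟫) • W` and `M (M y) = K • (⟪W, y⟫ • W - y)`. -/
theorem stmt11 {V : Type*} [NormedAddCommGroup V] [InnerProductSpace ℝ V]
    (W : V) (hW : ‖W‖ = 1) (M : V →ₗ[ℝ] V) (hMW : M W = 0) (K : ℝ)
    (C : V →ₗ[ℝ] V)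
    (hC : ∀ y z : V, ⟪W, z⟫ • (M (M y) + K • y) = ⟪W, y⟫ • C z) :
    (∀ z : V, C z = (K * ⟪W, z⟫) • W) ∧
      ∀ y : V, M (M y) = K • (⟪W, y⟫ • W - y) := by
  have hWW : ⟪W, W⟫ = (1 : ℝ) := by
    rw [real_inner_self_eq_norm_sq, hW]; norm_num
  have hCz : ∀ z : V, C z = (K * ⟪W, z⟫) • W := by
    intro z
    have h := hC W z
    rw [hMW, map_zero, zero_add, hWW, one_smul] at h
    rw [← h, smul_smul, mul_comm]
  refine ⟨hCz, fun y => ?_⟩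
  have h := hC y W
  rw [hWW, one_smul, hCz W, hWW, mul_one] at h
  have : M (M y) = ⟪W, y⟫ • K • W - K • y := by
    rw [← h]; abel
  rw [this, smul_sub, smul_comm]
end
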